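/- For every n ≥ 2, there is exactly one value that appears at least twice in the n-th antidiagonal of the Hurt-Sada array; that is, there exists a unique x such that A(i, n−i) = A(j, n−j) = x for some 0 ≤ i < j ≤ n. -/
import Mathlib


/-- The Hurt-Sada array `A : ℕ → ℕ → ℕ`.  Row `0` is the identity sequence;
row `n+1` is obtained from row `n` by moving the entry `n+1` (located at the unique
position `p` with `A n p = n+1`) by `n+1` places to the right, shifting the jumped-over
entries one place left. -/
noncomputable def A : ℕ → ℕ → ℕ
  | 0, k => k
  | n + 1, j =>
    let p := sInf {i | A n i = n + 1}
    if j < p then A n j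
    else if j < p + (n + 1) then A n (j + 1)
    else if j = p + (n + 1) then n + 1
    else A n j

def P : ℕ → ℕ
  | 0 => 0
  | n+1 => n + 1 - P (min n (P n))
decreasing_by simp_wf; omega

lemma P_zero : P 0 = 0 := by simp [P]

lemma P_le : ∀ n, P n ≤ n := by
  intro n
  cases n with
  | zero => simp [P]
  | succ m => simp [P]

lemma P_succ (n : ℕ) : P (n+1) = n + 1 - P (P n) := by
  rw [P, min_eq_right (P_le n)]

lemma P_add (n : ℕ) : P (n+1) + P (P n) = n + 1 := by
  have h1 := P_le (P n)
  have h2 := P_le n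
  rw [P_succ]
  omega

lemma P_one : P 1 = 1 := by
  have := P_add 0
  simp [P_zero] at this
  omega

lemma P_step : ∀ n, P n ≤ P (n+1) ∧ P (n+1) ≤ P n + 1 := by
  intro n
  induction n using Nat.strong_induction_on with
  | _ n ih =>
    match n with
    | 0 => rw [P_zero, P_one]; omega
    | m+1 =>
      have h1 := P_add m
      have h2 := P_add (m+1)
      have hm := ih m (by omega)
      by_cases hc : P (m+1) = P m
      · rw [hc] at h2; omega
      · have hc' : P (m+1) = P m + 1 := by omega
        have hpm := ih (P m) (by have := P_le m; omega)
        rw [hc'] at h2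
        omega

lemma P_mono : Monotone P := monotone_nat_of_le_succ (fun n => (P_step n).1)

lemma P_pos' {n : ℕ} (hn : 1 ≤ n) : 1 ≤ P n := by
  cases n with
  | zero => omega
  | succ m =>
    have := P_add m
    have := P_le (P m)
    have := P_le m
    omega

lemma P_lt {n : ℕ} (hn : 1 ≤ n) : P (n+1) ≤ n := by
  have h1 := P_add n
  have h2 : 1 ≤ P (P n) := P_pos' (P_pos' hn)
  omega

lemma G12 : ∀ n, P (P n + n) = n ∧ P (P n + n + 1) = n + 1 := by
  intro n
  induction n with
  | zero => rw [P_zero]; exact ⟨P_zero, P_one⟩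
  | succ m ih =>
    obtain ⟨g1, g2⟩ := ih
    have hstep := P_step m
    have key1 : P (P (m+1) + (m+1)) = m + 1 := by
      by_cases hc : P (m+1) = P m
      · rw [hc]
        have he : P m + (m + 1) = P m + m + 1 := by omega
        rw [he]; exact g2
      · have hc' : P (m+1) = P m + 1 := by omega
        have h := P_add (P m + m + 1)
        rw [g2] at h
        have he : P (m+1) + (m+1) = P m + m + 1 + 1 := by omega
        rw [he]
        omega
    have key2 : P (P (m+1) + (m+1) + 1) = m + 2 := by
      have h := P_add (P (m+1) + (m+1))
      rw [key1] at h
      omega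
    exact ⟨key1, key2⟩

lemma A_zero (k : ℕ) : A 0 k = k := by simp [A]

lemma A_succ (n j : ℕ) : A (n+1) j =
    if j < sInf {i | A n i = n + 1} then A n j
    else if j < sInf {i | A n i = n + 1} + (n + 1) then A n (j + 1)
    else if j = sInf {i | A n i = n + 1} + (n + 1) then n + 1
    else A n j := by
  rw [A]

lemma sInf_eq_of {S : Set ℕ} {q : ℕ} (hq : q ∈ S) (hmin : ∀ m, m < q → m ∉ S) :
    sInf S = q := by
  have h1 := Nat.sInf_le hq
  rcases lt_or_eq_of_le h1 with h | h
  · exact absurd (Nat.sInf_mem ⟨q, hq⟩) (hmin _ h)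
  · exact h

def RowInv (n : ℕ) : Prop :=
  (∀ j, j < P (n+1) → A n j = j) ∧
  (∀ v j, P (n+1) ≤ v → v ≤ n → j + n = P v + 2*v → A n j = v) ∧
  (∀ w j, n + 1 ≤ w → w ≤ P n + n → j + n + 1 = P w + w → A n j = w) ∧
  (∀ j, P n + n < j → A n j = j)

lemma sInf_row_zero : sInf {i | A 0 i = 1} = 1 := by
  apply sInf_eq_of
  · show A 0 1 = 1; exact A_zero 1
  · intro m hm
    interval_cases m
    · show ¬ (A 0 0 = 1); rw [A_zero]; omega

lemma P_two : P 2 = 1 := by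
  have h : P 2 + P (P 1) = 2 := P_add 1
  simp [P_one] at h
  omega

lemma A_one (j : ℕ) : A 1 j =
    if j < 1 then j else if j < 2 then A 0 (j+1) else if j = 2 then 1 else A 0 j := by
  rw [A_succ, sInf_row_zero]
  split_ifs with h1 h2 h3 <;> first | rw [A_zero] | rfl

lemma rowinv_one : RowInv 1 := by
  refine ⟨?_, ?_, ?_, ?_⟩
  · intro j hj
    rw [P_two] at hj
    interval_cases j
    rw [A_one]; norm_num
  · intro v j hv1 hv2 hj
    rw [P_two] at hv1
    have hv : v = 1 := by omega
    subst hv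
    rw [P_one] at hj
    have : j = 2 := by omega
    subst this
    rw [A_one]; norm_num
  · intro w j hw1 hw2 hj
    rw [P_one] at hw2
    have hw : w = 2 := by omega
    subst hw
    rw [P_two] at hj
    have : j = 1 := by omega
    subst this
    rw [A_one]; norm_num [A_zero]
  · intro j hj
    rw [P_one] at hj
    rw [A_one, A_zero]
    have h1 : ¬ j < 1 := by omega
    have h2 : ¬ j < 2 := by omega
    have h3 : ¬ j = 2 := by omega
    simp [h1, h2, h3, A_zero]

lemma sInf_row {n : ℕ} (hn : 1 ≤ n) (h : RowInv n) :
    sInf {i | A n i = n + 1} = P (n+1) := by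
  obtain ⟨ha, hb, hc, hd⟩ := h
  apply sInf_eq_of
  · show A n (P (n+1)) = n + 1
    apply hc (n+1) (P (n+1)) le_rfl
    · have := P_pos' hn; omega
    · ring
  · intro m hm
    show ¬ (A n m = n + 1)
    rw [ha m hm]
    have := P_le (n+1)
    omega

lemma rowinv_step {n : ℕ} (hn : 1 ≤ n) (h : RowInv n) : RowInv (n+1) := by
  have hq := sInf_row hn h
  obtain ⟨ha, hb, hc, hd⟩ := h
  have hA : ∀ j, A (n+1) j =
      if j < P (n+1) then A n j
      else if j < P (n+1) + (n+1) then A n (j + 1)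
      else if j = P (n+1) + (n+1) then n + 1
      else A n j := by
    intro j; rw [A_succ, hq]
  have hs1 := P_step n
  have hs2 : P (n+1) ≤ P (n+2) ∧ P (n+2) ≤ P (n+1) + 1 := P_step (n+1)
  have hs3 : P (n+2) ≤ P (n+3) ∧ P (n+3) ≤ P (n+2) + 1 := P_step (n+2)
  have hle1 := P_le n
  have hpos : 1 ≤ P n := P_pos' hn
  refine ⟨?_, ?_, ?_, ?_⟩
  · -- prefix
    show ∀ j, j < P (n+2) → A (n+1) j = j
    intro j hj
    rw [hA]
    by_cases h1 : j < P (n+1)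
    · rw [if_pos h1]; exact ha j h1
    · have hj' : j = P (n+1) := by omega
      subst hj'
      have hq' : P (n+2) = P (n+1) + 1 := by omega
      have h2 : P (n+2) + P (P (n+1)) = n + 2 := P_add (n+1)
      rw [if_neg h1, if_pos (by omega)]
      apply hb (P (n+1)) (P (n+1) + 1) le_rfl (P_lt hn)
      omega
  · -- smalls
    show ∀ v j, P (n+2) ≤ v → v ≤ n+1 → j + (n+1) = P v + 2*v → A (n+1) j = v
    intro v j hv1 hv2 hj
    rw [hA]
    rcases Nat.lt_or_ge v (n+1) with hv | hv
    · -- v ≤ n : shift case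
      have hvle : v ≤ n := by omega
      have hm1 : P v ≤ P n := P_mono hvle
      have hm2 : P (n+1) ≤ v := le_trans (hs2.1) hv1
      -- lower bound : j ≥ P (n+1)
      have hlow : P (n+1) ≤ j := by
        have h1 : P (P (n+2)) ≤ P v := P_mono hv1
        have h2 : P (n+3) + P (P (n+2)) = n + 3 := P_add (n+2)
        have h3 : P (n+2) ≤ v := hv1
        omega
      rw [if_neg (by omega), if_pos (by omega)]
      exact hb v (j+1) hm2 hvle (by omega)
    · -- v = n+1 : new landing
      have hv' : v = n + 1 := by omega
      subst hv'
      have hj' : j = P (n+1) + (n+1) := by omega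
      subst hj'
      rw [if_neg (by omega), if_neg (by omega), if_pos rfl]
  · -- larges
    show ∀ w j, n+2 ≤ w → w ≤ P (n+1) + (n+1) → j + (n+1) + 1 = P w + w → A (n+1) j = w
    intro w j hw1 hw2 hj
    rw [hA]
    rcases Nat.lt_or_ge (P n + n) w with hcase | hcase
    · -- new large, was identity
      have hg1 := (G12 n).2
      have hg2 := (G12 (n+1)).1
      have hub : P w ≤ n + 1 := by
        have := P_mono hw2; rw [hg2] at this; exact this
      have hlb : n + 1 ≤ P w := by
        have := P_mono (show P n + n + 1 ≤ w by omega); rw [hg1] at this; exact this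
      have hPw : P w = n + 1 := le_antisymm hub hlb
      have hjw : j + 1 = w := by omega
      rw [if_neg (by omega), if_pos (by omega), hjw]
      exact hd w (by omega)
    · -- old large, shifts left
      have hm1 : P (n+2) ≤ P w := P_mono hw1
      have hg1 := (G12 n).1
      have hub : P w ≤ n := by
        have := P_mono hcase; rw [hg1] at this; exact this
      rw [if_neg (by omega), if_pos (by omega)]
      exact hc w (j+1) (by omega) hcase (by omega)
  · -- tail identity
    show ∀ j, P (n+1) + (n+1) < j → A (n+1) j = j
    intro j hj
    rw [hA]
    rw [if_neg (by omega), if_neg (by omega), if_neg (by omega)]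
    exact hd j (by omega)

lemma rowinv_all : ∀ n, 1 ≤ n → RowInv n := by
  intro n hn
  induction n, hn using Nat.le_induction with
  | base => exact rowinv_one
  | succ m hm ih => exact rowinv_step hm ih

lemma sInf_eq' (n : ℕ) : sInf {i | A n i = n + 1} = P (n+1) := by
  cases n with
  | zero => rw [sInf_row_zero, P_one]
  | succ m => exact sInf_row (by omega) (rowinv_all _ (by omega))

lemma A_eval (n j : ℕ) : A (n+1) j =
    if j < P (n+1) then A n j
    else if j < P (n+1) + (n+1) then A n (j+1)
    else if j = P (n+1) + (n+1) then n + 1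
    else A n j := by
  rw [A_succ, sInf_eq']

lemma diag_head {i j : ℕ} (h : P i + i < j) : A i j = j := by
  cases i with
  | zero => exact A_zero j
  | succ m => exact (rowinv_all (m+1) (by omega)).2.2.2 j h

lemma diag_tail {i j : ℕ} (hi : 1 ≤ i) (h : j < P i) : A i j = j := by
  cases i with
  | zero => omega
  | succ m =>
    apply (rowinv_all (m+1) (by omega)).1 j
    have := P_step (m+1)
    omega

lemma diag_mid {i j : ℕ} (hi : 1 ≤ i) (h1 : P i ≤ j) (h2 : j < P i + i) :
    A i j = A (i-1) (j+1) := by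
  cases i with
  | zero => omega
  | succ m =>
    rw [A_eval]
    rw [if_neg (by omega), if_pos (by omega)]
    rfl

lemma diag_exact {i j : ℕ} (hi : 1 ≤ i) (h : j = P i + i) : A i j = i := by
  cases i with
  | zero => omega
  | succ m =>
    rw [A_eval]
    rw [if_neg (by omega), if_neg (by omega), if_pos (by omega)]

theorem antidiagonal_unique_repeat (n : ℕ) (hn : 2 ≤ n) :
    ∃! x : ℕ, ∃ i j : ℕ, i < j ∧ j ≤ n ∧ A i (n - i) = x ∧ A j (n - j) = x := by
  have hex1 : ∃ i, n ≤ P i + 2*i := ⟨n, by omega⟩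
  have hex2 : ∃ i, n < P i + i := ⟨n, by have := P_pos' (show 1 ≤ n by omega); omega⟩
  set i1 := Nat.find hex1 with hi1def
  set i2 := Nat.find hex2 with hi2def
  have f1 : n ≤ P i1 + 2*i1 := Nat.find_spec hex1
  have f2 : n < P i2 + i2 := Nat.find_spec hex2
  have fmin1 : ∀ i, i < i1 → P i + 2*i < n := by
    intro i h
    have := Nat.find_min hex1 h
    omega
  have fmin2 : ∀ i, i < i2 → P i + i ≤ n := by
    intro i h
    have := Nat.find_min hex2 h
    omega
  have hi1pos : 1 ≤ i1 := by
    by_contra h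
    have h0 : i1 = 0 := by omega
    rw [h0, P_zero] at f1
    omega
  have hi2n : i2 ≤ n := Nat.find_le (by have := P_pos' (show 1 ≤ n by omega); omega)
  clear_value i1 i2
  -- P i1 + i1 ≤ n
  have hple : P i1 + i1 ≤ n := by
    rcases Nat.lt_or_ge i1 2 with h2 | h2
    · have h1 : i1 = 1 := by omega
      rw [h1, P_one]; omega
    · obtain ⟨m, rfl⟩ : ∃ m, i1 = m + 1 := ⟨i1 - 1, by omega⟩
      have hmin := fmin1 m (by omega)
      have := P_step m
      omega
  have hi1i2 : i1 < i2 := by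
    by_contra h
    push_neg at h
    rcases Nat.lt_or_ge i2 i1 with hlt | hge
    · have := fmin1 i2 hlt; omega
    · have : i2 = i1 := by omega
      rw [this] at f2; omega
  -- values of the diagonal
  have dhead : ∀ i, i < i1 → A i (n - i) = n - i := by
    intro i h
    have hin : i ≤ n := by omega
    exact diag_head (by have := fmin1 i h; omega)
  have dtail : ∀ i, i2 ≤ i → i ≤ n → A i (n - i) = n - i := by
    intro i h hin
    have h1 : P i2 ≤ P i := P_mono h
    exact diag_tail (by omega) (by omega)
  have dmidk : ∀ k, i1 + k < i2 → A (i1 + k) (n - (i1 + k)) = A i1 (n - i1) := by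
    intro k
    induction k with
    | zero => intro _; rfl
    | succ m ih =>
      intro hk
      show A (i1 + m + 1) (n - (i1 + m + 1)) = A i1 (n - i1)
      have hm : i1 + m < i2 := by omega
      have hle : P (i1 + m + 1) + (i1 + m + 1) ≤ n := fmin2 _ hk
      have hstrict : n < P (i1 + m + 1) + 2*(i1 + m + 1) := by
        have h1 : P i1 ≤ P (i1 + m + 1) := P_mono (by omega)
        omega
      have hstep := diag_mid (i := i1 + m + 1) (j := n - (i1 + m + 1))
        (by omega) (by omega) (by omega)
      rw [hstep]
      have e1 : i1 + m + 1 - 1 = i1 + m := by omega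
      have e2 : n - (i1 + m + 1) + 1 = n - (i1 + m) := by omega
      rw [e1, e2]
      exact ih hm
  have dmid : ∀ i, i1 ≤ i → i < i2 → A i (n - i) = A i1 (n - i1) := by
    intro i hg hl
    obtain ⟨k, rfl⟩ : ∃ k, i = i1 + k := ⟨i - i1, by omega⟩
    exact dmidk k hl
  set v := A i1 (n - i1) with hv
  -- existence of a repeated pair for v
  have hpair : ∃ i j : ℕ, i < j ∧ j ≤ n ∧ A i (n - i) = v ∧ A j (n - j) = v := by
    rcases Nat.lt_or_ge n (P i1 + 2*i1) with hB | hA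
    · -- case B : shift at i1, repeat with head
      refine ⟨i1 - 1, i1, by omega, by omega, ?_, rfl⟩
      have hstep := diag_mid (i := i1) (j := n - i1) hi1pos (by omega) (by omega)
      have e2 : n - i1 + 1 = n - (i1 - 1) := by omega
      rw [hv, hstep, e2]
    · -- case A : n = P i1 + 2*i1, landing at i1
      have hAeq : n = P i1 + 2*i1 := by omega
      have hnext : P (i1 + 1) + (i1 + 1) ≤ n := by
        rcases Nat.lt_or_ge i1 2 with h2 | h2
        · have h1 : i1 = 1 := by omega
          have hn3 : n = 3 := by rw [h1, P_one] at hAeq; omega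
          rw [h1, hn3, P_two]
        · have := P_step i1
          omega
      have hlt2 : i1 + 1 < i2 := by
        by_contra h
        push_neg at h
        rcases Nat.lt_or_ge i2 (i1 + 1) with hlt | hge
        · have := fmin2 i2 (by omega)
          omega
        · have : i2 = i1 + 1 := by omega
          rw [this] at f2
          omega
      refine ⟨i1, i1 + 1, by omega, by omega, rfl, ?_⟩
      exact dmid (i1 + 1) (by omega) hlt2
  obtain ⟨a, b, hab, hbn, hav, hbv⟩ := hpair
  refine ⟨v, ⟨a, b, hab, hbn, hav, hbv⟩, ?_⟩
  rintro x ⟨i, j, hij, hjn, hix, hjx⟩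
  by_cases hmi : i1 ≤ i ∧ i < i2
  · rw [← hix]; exact dmid i hmi.1 hmi.2
  by_cases hmj : i1 ≤ j ∧ j < i2
  · rw [← hjx]; exact dmid j hmj.1 hmj.2
  -- both outside the middle : values are n - i and n - j, distinct
  exfalso
  have hdi : A i (n - i) = n - i := by
    rcases Nat.lt_or_ge i i1 with h | h
    · exact dhead i h
    · have : i2 ≤ i := by omega
      exact dtail i this (by omega)
  have hdj : A j (n - j) = n - j := by
    rcases Nat.lt_or_ge j i1 with h | h
    · exact dhead j h
    · have : i2 ≤ j := by omega
      exact dtail j this hjn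
  rw [hdi] at hix
  rw [hdj] at hjx
  omega
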